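/- arXiv:2510.24884 — 4 statements merged into one kernel-verified Lean document; each statement's English description precedes it below -/
import Mathlib

section
/- The set function M(A) = corr((1/|A|)·∑_{j∈A} x_j, y), mapping a nonempty subset A of column indices to the Pearson correlation of the averaged selected columns with y, is not submodular in general: there exist vectors x_1, x_2, x_3, y ∈ R^n and nested sets A = {1} ⊆ B = {1,2} with 3 ∉ B such that M(A ∪ {3}) − M(A) < M(B ∪ {3}) − M(B). -/
/-!
Take `x₁ = x₃ = y` and `x₂ = z` with `z` uncorrelated with `y`. Adding `x₃` to `{x₁}` gains
nothing, since both averages are `y` itself. Up to positive scaling, the averages over `{1, 2}`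
and `{1, 2, 3}` are `y + z` and `y + z / 2`, and by Pythagoras the correlation of `y + t z` with
`y` is `‖y‖ / √(‖y‖² + t² ‖z‖²)` (norms of centered vectors), which strictly decreases in `t ≥ 0`;
so adding `x₃` to `{1, 2}` gains strictly more.
-/

noncomputable def center {n : ℕ} (v : Fin n → ℝ) : Fin n → ℝ :=
  fun i => v i - (∑ j, v j) / n

noncomputable def vnorm {n : ℕ} (v : Fin n → ℝ) : ℝ :=
  Real.sqrt (∑ i, (v i) ^ 2)

noncomputable def pcorr {n : ℕ} (x y : Fin n → ℝ) : ℝ :=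
  (∑ i, center x i * center y i) / (vnorm (center x) * vnorm (center y))

open Finset

variable {n : ℕ}

theorem center_add_smul (y z : Fin n → ℝ) (t : ℝ) :
    center (y + t • z) = center y + t • center z := by
  funext i
  simp only [center, Pi.add_apply, Pi.smul_apply, smul_eq_mul, sum_add_distrib, ← mul_sum]
  ring

theorem center_smul (c : ℝ) (x : Fin n → ℝ) : center (c • x) = c • center x := by
  funext i
  simp only [center, Pi.smul_apply, smul_eq_mul, ← mul_sum]
  ring

theorem center_eq_self_of_sum_eq_zero {v : Fin n → ℝ} (hv : ∑ i, v i = 0) : center v = v := by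
  funext i
  simp [center, hv]

theorem vnorm_sq (v : Fin n → ℝ) : vnorm v ^ 2 = ∑ i, v i ^ 2 :=
  Real.sq_sqrt (sum_nonneg fun i _ => sq_nonneg (v i))

theorem vnorm_smul_of_nonneg {c : ℝ} (hc : 0 ≤ c) (v : Fin n → ℝ) :
    vnorm (c • v) = c * vnorm v := by
  simp only [vnorm, Pi.smul_apply, smul_eq_mul, mul_pow, ← mul_sum]
  rw [Real.sqrt_mul (sq_nonneg c), Real.sqrt_sq hc]

theorem pcorr_smul_left {c : ℝ} (hc : 0 < c) (x y : Fin n → ℝ) : pcorr (c • x) y = pcorr x y := by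
  simp only [pcorr, center_smul, vnorm_smul_of_nonneg hc.le, Pi.smul_apply, smul_eq_mul,
    mul_assoc, ← mul_sum]
  exact mul_div_mul_left _ _ hc.ne'

theorem vnorm_add_smul_of_orthogonal {v w : Fin n → ℝ} (hvw : ∑ i, v i * w i = 0) (t : ℝ) :
    vnorm (v + t • w) = √(vnorm v ^ 2 + t ^ 2 * vnorm w ^ 2) := by
  have expand : ∑ i, (v i + t * w i) ^ 2 = ∑ i, v i ^ 2 + 2 * t * ∑ i, v i * w i
      + t ^ 2 * ∑ i, w i ^ 2 := by
    simp only [mul_sum, ← sum_add_distrib]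
    exact sum_congr rfl fun i _ => by ring
  rw [vnorm, vnorm_sq, vnorm_sq]
  simp only [Pi.add_apply, Pi.smul_apply, smul_eq_mul]
  rw [expand, hvw]
  ring_nf

theorem pcorr_add_smul_of_uncorrelated {y z : Fin n → ℝ}
    (hyz : ∑ i, center y i * center z i = 0) (t : ℝ) :
    pcorr (y + t • z) y =
      vnorm (center y) / √(vnorm (center y) ^ 2 + t ^ 2 * vnorm (center z) ^ 2) := by
  have inner_eq : ∑ i, center (y + t • z) i * center y i = vnorm (center y) ^ 2 := by
    rw [vnorm_sq, center_add_smul]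
    simp only [Pi.add_apply, Pi.smul_apply, smul_eq_mul, add_mul, sum_add_distrib, mul_assoc,
      ← mul_sum, mul_comm (center z _), hyz, mul_zero, add_zero, sq]
  rw [pcorr, inner_eq, center_add_smul, vnorm_add_smul_of_orthogonal hyz, mul_comm (√_)]
  rcases eq_or_ne (vnorm (center y)) 0 with h | h
  · simp [h]
  · rw [sq, mul_div_mul_left _ _ h]

theorem div_sqrt_add_mul_sq_lt {a b s t : ℝ} (ha : 0 < a) (hb : 0 < b) (hs : 0 ≤ s)
    (hst : s < t) : a / √(a ^ 2 + t ^ 2 * b ^ 2) < a / √(a ^ 2 + s ^ 2 * b ^ 2) := by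
  apply div_lt_div_of_pos_left ha (by positivity)
  gcongr

theorem pearson_selection_not_submodular :
    ∃ (n : ℕ) (x1 x2 x3 y : Fin n → ℝ),
      vnorm (center y) ≠ 0 ∧
      pcorr (fun i => (x1 i + x3 i) / 2) y - pcorr x1 y <
        pcorr (fun i => (x1 i + x2 i + x3 i) / 3) y -
          pcorr (fun i => (x1 i + x2 i) / 2) y := by
  set y : Fin 4 → ℝ := ![1, -1, 0, 0]
  set z : Fin 4 → ℝ := ![0, 0, 1, -1]
  have center_y : center y = y := center_eq_self_of_sum_eq_zero (by simp [y, Fin.sum_univ_four])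
  have center_z : center z = z := center_eq_self_of_sum_eq_zero (by simp [z, Fin.sum_univ_four])
  have uncorrelated : ∑ i, center y i * center z i = 0 := by
    simp [center_y, center_z, y, z, Fin.sum_univ_four]
  have norm_y : 0 < vnorm (center y) := by
    simp [center_y, vnorm, y, Fin.sum_univ_four]
  have norm_z : 0 < vnorm (center z) := by
    simp [center_z, vnorm, z, Fin.sum_univ_four]
  have avg_13 : (fun i => (y i + y i) / 2) = y := by funext i; ring
  have avg_123 : (fun i => (y i + z i + y i) / 3) = (2 / 3 : ℝ) • (y + (1 / 2 : ℝ) • z) := by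
    funext i; simp only [Pi.add_apply, Pi.smul_apply, smul_eq_mul]; ring
  have avg_12 : (fun i => (y i + z i) / 2) = (1 / 2 : ℝ) • (y + (1 : ℝ) • z) := by
    funext i; simp only [Pi.add_apply, Pi.smul_apply, smul_eq_mul]; ring
  refine ⟨4, y, z, y, y, norm_y.ne', ?_⟩
  rw [avg_13, sub_self, avg_123, avg_12, pcorr_smul_left (by norm_num),
    pcorr_smul_left (by norm_num), pcorr_add_smul_of_uncorrelated uncorrelated,
    pcorr_add_smul_of_uncorrelated uncorrelated, sub_pos]
  exact div_sqrt_add_mul_sq_lt norm_y norm_z (by norm_num) (by norm_num)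
end

section
/- Bounded effect of a new selected example on Pearson correlation of transformed accuracies: let z_i^{(S)} ∈ [α,1−α] be the average over S selected examples of model i's 0–1 correctness, and suppose adding one example keeps z_i^{(S+1)} ∈ [α,1−α]. With x_i = Φ⁻¹(z_i^{(S)}), x_i' = Φ⁻¹(z_i^{(S+1)}), fixed y_i = Φ⁻¹(w_i) with w_i ∈ [α,1−α], and assuming the centered squared norms of x, x', y are all at least d·v_α where v_α = α(1−α)/L_α², then |corr(x',y) − corr(x,y)| ≤ κ·M_α/(S+1) with κ = 2L_α³/(α(1−α)), where L_α is the Lipschitz constant of Φ⁻¹ on [α,1−α] and M_α = max{|Φ⁻¹(α)|,|Φ⁻¹(1−α)|}. -/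
noncomputable def stdGaussPDF (x : ℝ) : ℝ :=
  Real.exp (-(x ^ 2) / 2) / Real.sqrt (2 * Real.pi)

noncomputable def stdGaussCDF (x : ℝ) : ℝ :=
  ∫ t in Set.Iio x, stdGaussPDF t

noncomputable def probit : ℝ → ℝ :=
  Function.invFun stdGaussCDF

/-!
Pearson correlation is the inner product of the normalized centered vectors, and normalization
moves a vector `u'` by at most `2‖u' - u‖ / ‖u'‖`. Centering does not increase Euclidean norms,
so the Lipschitz bound on the probit gives `‖X' - X‖ ≤ √d · Lα / (S + 1)` for the centered
transformed accuracies, while monotonicity of the probit gives `‖X'‖ ≤ √d · M_α`. Together with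
`‖X'‖² ≥ d · v_α` this yields `1 / ‖X'‖ ≤ √d · M_α / (d · v_α)`, which is the claimed bound.
-/

open MeasureTheory Filter Topology ProbabilityTheory
open scoped RealInnerProductSpace

lemma stdGaussPDF_eq_gaussianPDFReal : stdGaussPDF = gaussianPDFReal 0 1 := by
  ext x
  simp [stdGaussPDF, gaussianPDFReal, div_eq_inv_mul]

lemma stdGaussPDF_pos (x : ℝ) : 0 < stdGaussPDF x := by
  unfold stdGaussPDF
  positivity

lemma integrable_stdGaussPDF : Integrable stdGaussPDF := by
  rw [stdGaussPDF_eq_gaussianPDFReal]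
  exact integrable_gaussianPDFReal 0 1

lemma integral_stdGaussPDF : ∫ t, stdGaussPDF t = 1 := by
  rw [stdGaussPDF_eq_gaussianPDFReal]
  exact integral_gaussianPDFReal_eq_one 0 one_ne_zero

lemma stdGaussCDF_sub (a b : ℝ) :
    stdGaussCDF b - stdGaussCDF a = ∫ t in a..b, stdGaussPDF t :=
  intervalIntegral.integral_Iio_sub_Iio' integrable_stdGaussPDF.integrableOn
    integrable_stdGaussPDF.integrableOn

lemma stdGaussCDF_add_integral_Ici (a : ℝ) :
    stdGaussCDF a + ∫ t in Set.Ici a, stdGaussPDF t = 1 := by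
  rw [← integral_stdGaussPDF]
  exact intervalIntegral.integral_Iio_add_Ici integrable_stdGaussPDF.integrableOn
    integrable_stdGaussPDF.integrableOn

lemma stdGaussCDF_strictMono : StrictMono stdGaussCDF := fun a b hab => by
  have := intervalIntegral.intervalIntegral_pos_of_pos
    integrable_stdGaussPDF.intervalIntegrable stdGaussPDF_pos hab
  linarith [stdGaussCDF_sub a b]

lemma continuous_stdGaussCDF : Continuous stdGaussCDF := by
  have h : stdGaussCDF = fun b => stdGaussCDF 0 + ∫ t in (0 : ℝ)..b, stdGaussPDF t := by
    ext b
    linarith [stdGaussCDF_sub 0 b]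
  rw [h]
  exact continuous_const.add (integrable_stdGaussPDF.continuous_primitive 0)

lemma tendsto_stdGaussCDF_atTop : Tendsto stdGaussCDF atTop (𝓝 1) := by
  have h := (aecover_Iio (μ := volume) tendsto_id).integral_tendsto_of_countably_generated
    integrable_stdGaussPDF
  rwa [integral_stdGaussPDF] at h

lemma tendsto_stdGaussCDF_atBot : Tendsto stdGaussCDF atBot (𝓝 0) := by
  have hIci := (aecover_Ici (μ := volume) tendsto_id).integral_tendsto_of_countably_generated
    integrable_stdGaussPDF
  rw [integral_stdGaussPDF] at hIci
  have h : stdGaussCDF = fun a => 1 - ∫ t in Set.Ici a, stdGaussPDF t := by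
    ext a
    linarith [stdGaussCDF_add_integral_Ici a]
  simpa [h] using (tendsto_const_nhds (x := (1 : ℝ))).sub hIci

lemma stdGaussCDF_probit {p : ℝ} (hp0 : 0 < p) (hp1 : p < 1) : stdGaussCDF (probit p) = p := by
  have hp : p ∈ Set.range stdGaussCDF :=
    mem_range_of_exists_le_of_exists_ge continuous_stdGaussCDF
      ((tendsto_stdGaussCDF_atBot.eventually_lt_const hp0).exists.imp fun _ => le_of_lt)
      ((tendsto_stdGaussCDF_atTop.eventually_const_lt hp1).exists.imp fun _ => le_of_lt)
  exact Function.invFun_eq hp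

lemma probit_le_probit {p q : ℝ} (hp0 : 0 < p) (hpq : p ≤ q) (hq1 : q < 1) :
    probit p ≤ probit q := by
  rw [← stdGaussCDF_strictMono.le_iff_le, stdGaussCDF_probit hp0 (hpq.trans_lt hq1),
    stdGaussCDF_probit (hp0.trans_le hpq) hq1]
  exact hpq

lemma abs_probit_le_max {α p : ℝ} (hα : 0 < α) (hp : p ∈ Set.Icc α (1 - α)) :
    |probit p| ≤ max |probit α| |probit (1 - α)| := by
  have hp0 : 0 < p := hα.trans_le hp.1
  have hlo : probit α ≤ probit p := probit_le_probit hα hp.1 (by linarith [hp.2])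
  have hhi : probit p ≤ probit (1 - α) := probit_le_probit hp0 hp.2 (by linarith)
  exact abs_le_max_abs_abs hlo hhi

section Normalize

open NormedSpace (normalize)

variable {F : Type*} [NormedAddCommGroup F] [InnerProductSpace ℝ F]

lemma real_inner_div_norm_mul_norm_eq_inner_normalize (u v : F) :
    ⟪u, v⟫ / (‖u‖ * ‖v‖) = ⟪normalize u, normalize v⟫ := by
  rw [NormedSpace.normalize, NormedSpace.normalize, real_inner_smul_left, real_inner_smul_right,
    div_eq_mul_inv, mul_inv]
  ring

lemma norm_normalize_sub_normalize_le {u u' : F} (hu' : u' ≠ 0) :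
    ‖normalize u' - normalize u‖ ≤ 2 * ‖u' - u‖ / ‖u'‖ := by
  have hpos : 0 < ‖u'‖ := norm_pos_iff.mpr hu'
  have hsplit : normalize u' - normalize u = ‖u'‖⁻¹ • (u' - u) + (‖u'‖⁻¹ - ‖u‖⁻¹) • u := by
    rw [NormedSpace.normalize, NormedSpace.normalize, smul_sub, sub_smul]
    abel
  have hrescale : ‖(‖u'‖⁻¹ - ‖u‖⁻¹) • u‖ ≤ ‖u' - u‖ / ‖u'‖ := by
    rcases eq_or_ne u 0 with rfl | hu
    · simp only [smul_zero, norm_zero]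
      positivity
    have hu_pos : 0 < ‖u‖ := norm_pos_iff.mpr hu
    calc ‖(‖u'‖⁻¹ - ‖u‖⁻¹) • u‖ = |‖u‖ - ‖u'‖| / ‖u'‖ := by
          rw [norm_smul, Real.norm_eq_abs, inv_sub_inv hpos.ne' hu_pos.ne', abs_div,
            abs_of_pos (mul_pos hpos hu_pos)]
          field_simp
      _ ≤ ‖u' - u‖ / ‖u'‖ := by
          gcongr
          rw [abs_sub_comm]
          exact abs_norm_sub_norm_le u' u
  calc ‖normalize u' - normalize u‖
      ≤ ‖‖u'‖⁻¹ • (u' - u)‖ + ‖(‖u'‖⁻¹ - ‖u‖⁻¹) • u‖ := hsplit ▸ norm_add_le _ _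
    _ ≤ ‖u' - u‖ / ‖u'‖ + ‖u' - u‖ / ‖u'‖ := by
          gcongr
          rw [norm_smul, norm_inv, norm_norm, inv_mul_eq_div]
    _ = 2 * ‖u' - u‖ / ‖u'‖ := by ring

lemma abs_inner_normalize_sub_inner_normalize_le (u u' v : F) :
    |⟪normalize u', normalize v⟫ - ⟪normalize u, normalize v⟫| ≤
      ‖normalize u' - normalize u‖ := by
  rw [← inner_sub_left]
  refine (abs_real_inner_le_norm _ _).trans ?_
  by_cases hv : v = 0
  · simp [hv]
  · rw [NormedSpace.norm_normalize hv, mul_one]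

end Normalize

lemma norm_le_sqrt_card_mul_of_abs_le {ι : Type*} [Fintype ι] {x : EuclideanSpace ℝ ι} {c : ℝ}
    (hc : 0 ≤ c) (h : ∀ i, |x i| ≤ c) : ‖x‖ ≤ √(Fintype.card ι) * c := by
  rw [EuclideanSpace.norm_eq, ← Real.sqrt_sq hc, ← Real.sqrt_mul (Nat.cast_nonneg _)]
  refine Real.sqrt_le_sqrt ?_
  calc ∑ i, ‖x i‖ ^ 2 ≤ ∑ _i : ι, c ^ 2 :=
        Finset.sum_le_sum fun i _ => pow_le_pow_left₀ (norm_nonneg _) (h i) 2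
    _ = Fintype.card ι * c ^ 2 := by simp

section Centering

variable {n : ℕ}

lemma center_sub (a b : Fin n → ℝ) : center (a - b) = center a - center b := by
  ext i
  simp only [center, Pi.sub_apply, Finset.sum_sub_distrib, sub_div]
  ring

lemma sum_sq_center_le (v : Fin n → ℝ) : ∑ i, center v i ^ 2 ≤ ∑ i, v i ^ 2 := by
  set m := (∑ j, v j) / n with hm
  have hsum : ∑ j, v j = n * m := by
    rcases eq_or_ne n 0 with rfl | hn
    · simp
    · rw [hm, mul_div_cancel₀ _ (Nat.cast_ne_zero.mpr hn)]
  have hexpand : ∑ i, center v i ^ 2 = ∑ i, v i ^ 2 - n * m ^ 2 := by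
    have hcenter : ∀ i, center v i = v i - m := fun _ => rfl
    simp only [hcenter, sub_sq, Finset.sum_add_distrib, Finset.sum_sub_distrib, ← Finset.sum_mul,
      ← Finset.mul_sum, Finset.sum_const, Finset.card_univ, Fintype.card_fin, nsmul_eq_mul]
    rw [hsum]
    ring
  have : 0 ≤ n * m ^ 2 := by positivity
  linarith

lemma vnorm_eq_norm_toLp (v : Fin n → ℝ) : vnorm v = ‖WithLp.toLp 2 v‖ := by
  simp [vnorm, EuclideanSpace.norm_eq]

lemma sum_mul_eq_inner_toLp (u v : Fin n → ℝ) :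
    ∑ i, u i * v i = ⟪WithLp.toLp 2 u, WithLp.toLp 2 v⟫ := by
  simp [PiLp.inner_apply, mul_comm]

-- Also for constant `x` or `y`: then both sides vanish, as `0 / 0 = 0` and `normalize 0 = 0`.
lemma pcorr_eq_inner_normalize (x y : Fin n → ℝ) :
    pcorr x y = ⟪NormedSpace.normalize (WithLp.toLp 2 (center x)),
      NormedSpace.normalize (WithLp.toLp 2 (center y))⟫ := by
  rw [pcorr, sum_mul_eq_inner_toLp, vnorm_eq_norm_toLp, vnorm_eq_norm_toLp,
    real_inner_div_norm_mul_norm_eq_inner_normalize]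

lemma norm_toLp_center_le (v : Fin n → ℝ) :
    ‖WithLp.toLp 2 (center v)‖ ≤ ‖WithLp.toLp 2 v‖ := by
  rw [← vnorm_eq_norm_toLp, ← vnorm_eq_norm_toLp]
  exact Real.sqrt_le_sqrt (sum_sq_center_le v)

lemma norm_toLp_center_le_sqrt_mul {v : Fin n → ℝ} {c : ℝ} (hc : 0 ≤ c) (hv : ∀ i, |v i| ≤ c) :
    ‖WithLp.toLp 2 (center v)‖ ≤ √n * c := by
  simpa only [Fintype.card_fin] using
    (norm_toLp_center_le v).trans (norm_le_sqrt_card_mul_of_abs_le hc hv)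

lemma abs_pcorr_sub_pcorr_le (hn : 0 < n) {x x' y : Fin n → ℝ} {δ b a : ℝ}
    (hδ : ∀ i, |x' i - x i| ≤ δ) (hb : ∀ i, |x' i| ≤ b) (ha : 0 < a)
    (hvar : n * a ≤ ∑ i, center x' i ^ 2) :
    |pcorr x' y - pcorr x y| ≤ 2 * δ * b / a := by
  have hδ0 : 0 ≤ δ := (abs_nonneg _).trans (hδ ⟨0, hn⟩)
  have hb0 : 0 ≤ b := (abs_nonneg _).trans (hb ⟨0, hn⟩)
  set X := WithLp.toLp 2 (center x)
  set X' := WithLp.toLp 2 (center x')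
  have hΔ : ‖X' - X‖ ≤ √n * δ := by
    rw [← WithLp.toLp_sub, ← center_sub]
    exact norm_toLp_center_le_sqrt_mul hδ0 hδ
  have hX'_le : ‖X'‖ ≤ √n * b := norm_toLp_center_le_sqrt_mul hb0 hb
  have hX'_ge : n * a ≤ ‖X'‖ ^ 2 := by
    rw [EuclideanSpace.real_norm_sq_eq]
    exact hvar
  have hX'_pos : 0 < ‖X'‖ := by
    have : (0 : ℝ) < n * a := by positivity
    nlinarith [norm_nonneg X']
  calc |pcorr x' y - pcorr x y|
      ≤ ‖NormedSpace.normalize X' - NormedSpace.normalize X‖ := by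
        rw [pcorr_eq_inner_normalize, pcorr_eq_inner_normalize]
        exact abs_inner_normalize_sub_inner_normalize_le _ _ _
    _ ≤ 2 * ‖X' - X‖ / ‖X'‖ := norm_normalize_sub_normalize_le (norm_pos_iff.mp hX'_pos)
    _ = 2 * ‖X' - X‖ * ‖X'‖ / ‖X'‖ ^ 2 := by field_simp
    _ ≤ 2 * (√n * δ) * (√n * b) / (n * a) := by gcongr
    _ = 2 * δ * b / a := by
        rw [show 2 * (√n * δ) * (√n * b) = 2 * (√n * √n) * δ * b by ring,
          Real.mul_self_sqrt (Nat.cast_nonneg n)]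
        field_simp

end Centering

theorem pearson_bounded_effect_of_new_example_general {d : ℕ} (S : ℕ)
    (α Lα : ℝ) (hα : 0 < α) (hα2 : α < 1 / 2) (hLα : 0 < Lα)
    (hLip : ∀ p ∈ Set.Icc α (1 - α), ∀ q ∈ Set.Icc α (1 - α),
      |probit p - probit q| ≤ Lα * |p - q|)
    (z z' : Fin d → ℝ)
    (hz : ∀ i, z i ∈ Set.Icc α (1 - α))
    (hz' : ∀ i, z' i ∈ Set.Icc α (1 - α))
    (hchange : ∀ i, |z' i - z i| ≤ 1 / (S + 1))
    (x : Fin d → ℝ) (hxdef : x = fun i => probit (z i))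
    (x' : Fin d → ℝ) (hx'def : x' = fun i => probit (z' i))
    (y : Fin d → ℝ)
    (hvx' : (d : ℝ) * (α * (1 - α) / Lα ^ 2) ≤ ∑ i, (center x' i) ^ 2) :
    |pcorr x' y - pcorr x y| ≤
      (2 * Lα ^ 3 / (α * (1 - α))) *
        (max |probit α| |probit (1 - α)|) / (S + 1) := by
  have hαα : 0 < α * (1 - α) := by nlinarith
  rcases Nat.eq_zero_or_pos d with rfl | hd
  · simp only [pcorr, Finset.univ_eq_empty, Finset.sum_empty, zero_div, sub_zero, abs_zero]
    have hM : 0 ≤ max |probit α| |probit (1 - α)| := (abs_nonneg _).trans (le_max_left _ _)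
    positivity
  have hstep : ∀ i, |x' i - x i| ≤ Lα / (S + 1) := fun i => by
    subst hxdef hx'def
    calc |probit (z' i) - probit (z i)| ≤ Lα * |z' i - z i| := hLip _ (hz' i) _ (hz i)
      _ ≤ Lα * (1 / (S + 1)) := by gcongr; exact hchange i
      _ = Lα / (S + 1) := mul_one_div _ _
  have hbound : ∀ i, |x' i| ≤ max |probit α| |probit (1 - α)| := fun i =>
    hx'def ▸ abs_probit_le_max hα (hz' i)
  calc |pcorr x' y - pcorr x y|
      ≤ 2 * (Lα / (S + 1)) * max |probit α| |probit (1 - α)| / (α * (1 - α) / Lα ^ 2) :=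
        abs_pcorr_sub_pcorr_le hd hstep hbound (by positivity) hvx'
    _ = _ := by
        field_simp

theorem pearson_bounded_effect_of_new_example {d : ℕ} (S : ℕ)
    (α Lα : ℝ) (hα : 0 < α) (hα2 : α < 1 / 2) (hLα : 0 < Lα)
    (hLip : ∀ p ∈ Set.Icc α (1 - α), ∀ q ∈ Set.Icc α (1 - α),
      |probit p - probit q| ≤ Lα * |p - q|)
    (z z' w : Fin d → ℝ)
    (hz : ∀ i, z i ∈ Set.Icc α (1 - α))
    (hz' : ∀ i, z' i ∈ Set.Icc α (1 - α))
    (hw : ∀ i, w i ∈ Set.Icc α (1 - α))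
    (hchange : ∀ i, |z' i - z i| ≤ 1 / (S + 1))
    (x : Fin d → ℝ) (hxdef : x = fun i => probit (z i))
    (x' : Fin d → ℝ) (hx'def : x' = fun i => probit (z' i))
    (y : Fin d → ℝ) (hydef : y = fun i => probit (w i))
    (hvx : (d : ℝ) * (α * (1 - α) / Lα ^ 2) ≤ ∑ i, (center x i) ^ 2)
    (hvx' : (d : ℝ) * (α * (1 - α) / Lα ^ 2) ≤ ∑ i, (center x' i) ^ 2)
    (hvy : (d : ℝ) * (α * (1 - α) / Lα ^ 2) ≤ ∑ i, (center y i) ^ 2) :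
    |pcorr x' y - pcorr x y| ≤
      (2 * Lα ^ 3 / (α * (1 - α))) *
        (max |probit α| |probit (1 - α)|) / (S + 1) :=
  pearson_bounded_effect_of_new_example_general S α Lα hα hα2 hLα hLip z z' hz hz' hchange x hxdef
    x' hx'def y hvx'
end

section
/- Bounded effect of adding one model on Pearson correlation: let (x_i, y_i)_{i=1}^N be pairs with |x_i|, |y_i| ≤ B, and suppose the centered squared norms of x and y are each at least N·v for some v > 0 and remain at least (N+1)·v after appending a new pair (x_{N+1}, y_{N+1}) with |x_{N+1}|, |y_{N+1}| ≤ B. Then |ρ_{N+1} − ρ_N| ≤ κ·B²/(N·v) for an absolute constant κ, where ρ_N and ρ_{N+1} are the sample Pearson correlations before and after the addition. -/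
/-!
Write `S(x, y) = ∑ (xᵢ - x̄)(yᵢ - ȳ)` for the co-moment, so `ρ = S(x, y) / √(S(x, x) S(y, y))`.
Appending a pair changes `S` by Welford's update `N/(N+1) · (x_{N+1} - x̄_N)(y_{N+1} - ȳ_N)`,
which is at most `4B²` in absolute value and nonnegative when `x = y`. So the numerator and both
variances move by at most `4B²`, while the new denominator is at least `(N+1)v`. Since `|ρ_N| ≤ 1`
by Cauchy–Schwarz, `ρ` moves by at most `3 · 4B² / ((N+1)v)`, and `κ = 12` works.
-/

open Finset

variable {n : ℕ}

noncomputable def mean (x : Fin n → ℝ) : ℝ := (∑ i, x i) / n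

noncomputable def comoment (x y : Fin n → ℝ) : ℝ := ∑ i, center x i * center y i

lemma center_eq_sub_mean (x : Fin n → ℝ) (i : Fin n) : center x i = x i - mean x := rfl

lemma comoment_self (x : Fin n → ℝ) : comoment x x = ∑ i, center x i ^ 2 := by
  simp only [comoment, sq]

lemma comoment_self_nonneg (x : Fin n → ℝ) : 0 ≤ comoment x x := by
  rw [comoment_self]
  positivity

lemma comoment_sq_le (x y : Fin n → ℝ) : comoment x y ^ 2 ≤ comoment x x * comoment y y := by
  rw [comoment_self, comoment_self]
  exact sum_mul_sq_le_sq_mul_sq univ (center x) (center y)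

lemma pcorr_eq (x y : Fin n → ℝ) :
    pcorr x y = comoment x y / (√(comoment x x) * √(comoment y y)) := by
  rw [comoment_self, comoment_self]
  rfl

lemma comoment_eq_sum_mul_sub (x y : Fin n → ℝ) :
    comoment x y = ∑ i, x i * y i - (∑ i, x i) * (∑ i, y i) / n := by
  rcases Nat.eq_zero_or_pos n with rfl | hn
  · simp [comoment]
  have hn' : (n : ℝ) ≠ 0 := by positivity
  simp only [comoment, center_eq_sub_mean, mean, sub_mul, mul_sub, sum_sub_distrib, ← sum_mul,
    ← mul_sum, sum_const, card_univ, Fintype.card_fin, nsmul_eq_mul]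
  field_simp
  ring

lemma comoment_eq_comoment_init_add (x y : Fin (n + 1) → ℝ) :
    comoment x y = comoment (Fin.init x) (Fin.init y) +
      n / (n + 1) * (x (Fin.last n) - mean (Fin.init x)) *
        (y (Fin.last n) - mean (Fin.init y)) := by
  rcases Nat.eq_zero_or_pos n with rfl | hn
  · simp [comoment_eq_sum_mul_sub]
  have hn' : (n : ℝ) ≠ 0 := by positivity
  simp only [comoment_eq_sum_mul_sub, mean, Fin.sum_univ_castSucc, Fin.init]
  push_cast
  field_simp
  ring

lemma comoment_init_self_le (x : Fin (n + 1) → ℝ) :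
    comoment (Fin.init x) (Fin.init x) ≤ comoment x x := by
  rw [comoment_eq_comoment_init_add, mul_assoc]
  exact le_add_of_nonneg_right (mul_nonneg (by positivity) (mul_self_nonneg _))

lemma abs_mean_le {B : ℝ} (hn : 0 < n) {x : Fin n → ℝ} (hx : ∀ i, |x i| ≤ B) :
    |mean x| ≤ B := by
  have hn' : (0 : ℝ) < n := by exact_mod_cast hn
  rw [mean, abs_div, abs_of_pos hn', div_le_iff₀ hn']
  calc |∑ i, x i| ≤ ∑ i, |x i| := abs_sum_le_sum_abs _ _
    _ ≤ ∑ _i : Fin n, B := sum_le_sum fun i _ => hx i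
    _ = B * n := by simp [mul_comm]

lemma abs_comoment_sub_comoment_init_le {B : ℝ} (hn : 0 < n) {x y : Fin (n + 1) → ℝ}
    (hx : ∀ i, |x i| ≤ B) (hy : ∀ i, |y i| ≤ B) :
    |comoment x y - comoment (Fin.init x) (Fin.init y)| ≤ 4 * B ^ 2 := by
  have dev_le : ∀ z : Fin (n + 1) → ℝ, (∀ i, |z i| ≤ B) →
      |z (Fin.last n) - mean (Fin.init z)| ≤ 2 * B := fun z hz =>
    (abs_sub _ _).trans
      (by linarith [hz (Fin.last n), abs_mean_le hn (x := Fin.init z) fun i => hz _])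
  have hfrac : |(n : ℝ) / (n + 1)| ≤ 1 := by
    rw [abs_of_nonneg (by positivity), div_le_one (by positivity)]
    linarith
  rw [comoment_eq_comoment_init_add, add_sub_cancel_left, abs_mul, abs_mul]
  calc _ ≤ 1 * (2 * B) * (2 * B) := by
        have hB : 0 ≤ B := (abs_nonneg _).trans (hx 0)
        gcongr; exacts [dev_le x hx, dev_le y hy]
    _ = 4 * B ^ 2 := by ring

lemma abs_div_sub_div_le {S S' D D' : ℝ} (hSD : |S| ≤ D) (hDD' : D ≤ D') (hD' : 0 < D') :
    |S' / D' - S / D| ≤ (|S' - S| + (D' - D)) / D' := by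
  have hρ : |S / D| ≤ 1 := by
    rw [abs_div, abs_of_nonneg ((abs_nonneg S).trans hSD)]
    exact div_le_one_of_le₀ hSD ((abs_nonneg S).trans hSD)
  have hS : S / D * D = S := by
    rcases eq_or_ne D 0 with hD | hD
    · rw [hD, mul_zero, eq_comm, ← abs_nonpos_iff, ← hD]
      exact hSD
    · exact div_mul_cancel₀ S hD
  have hsplit : S' / D' - S / D = ((S' - S) + S / D * (D - D')) / D' := by
    rw [mul_sub, hS]
    field_simp
    ring
  rw [hsplit, abs_div, abs_of_pos hD']
  gcongr
  calc |S' - S + S / D * (D - D')| ≤ |S' - S| + |S / D| * |D - D'| := by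
        rw [← abs_mul]; exact abs_add_le _ _
    _ ≤ |S' - S| + 1 * (D' - D) := by
        rw [abs_sub_comm D, abs_of_nonneg (sub_nonneg.2 hDD')]
        gcongr
    _ = |S' - S| + (D' - D) := by ring

lemma abs_div_sqrt_mul_sqrt_sub_le {S S' Qx Qy Qx' Qy' δ w : ℝ}
    (hQx : 0 ≤ Qx) (hQy : 0 ≤ Qy) (hCS : S ^ 2 ≤ Qx * Qy) (hw : 0 < w)
    (hwx : w ≤ Qx') (hwy : w ≤ Qy') (hx : Qx ≤ Qx') (hx' : Qx' - Qx ≤ δ)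
    (hy : Qy ≤ Qy') (hy' : Qy' - Qy ≤ δ) (hS : |S' - S| ≤ δ) :
    |S' / (√Qx' * √Qy') - S / (√Qx * √Qy)| ≤ 3 * δ / w := by
  have hδ : 0 ≤ δ := (abs_nonneg _).trans hS
  have hQx' : 0 < Qx' := hw.trans_le hwx
  have hQy' : 0 < Qy' := hw.trans_le hwy
  have hSD : |S| ≤ √Qx * √Qy := by
    rw [← Real.sqrt_mul hQx, ← Real.sqrt_sq_eq_abs]
    exact Real.sqrt_le_sqrt hCS
  have hDD' : √Qx * √Qy ≤ √Qx' * √Qy' := by gcongr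
  have hwD' : w ≤ √Qx' * √Qy' :=
    calc w = √w * √w := (Real.mul_self_sqrt hw.le).symm
      _ ≤ √Qx' * √Qy' := by gcongr
  have hD'sq : (√Qx' * √Qy') ^ 2 = Qx' * Qy' := by
    rw [mul_pow, Real.sq_sqrt hQx'.le, Real.sq_sqrt hQy'.le]
  have hDsq : (√Qx * √Qy) ^ 2 = Qx * Qy := by
    rw [mul_pow, Real.sq_sqrt hQx, Real.sq_sqrt hQy]
  have hgap : (√Qx' * √Qy' - √Qx * √Qy) / (√Qx' * √Qy') ≤ 2 * δ / w :=
    calc _ ≤ ((√Qx' * √Qy') ^ 2 - (√Qx * √Qy) ^ 2) / (√Qx' * √Qy') ^ 2 := by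
          rw [div_le_div_iff₀ (hw.trans_le hwD') (by positivity)]
          nlinarith [mul_nonneg (mul_nonneg (sub_nonneg.2 hDD') (hw.trans_le hwD').le)
            (show 0 ≤ √Qx * √Qy by positivity)]
      _ ≤ δ * (Qx' + Qy') / (Qx' * Qy') := by
          rw [hD'sq, hDsq]
          gcongr
          nlinarith
      _ = δ / Qy' + δ / Qx' := by field_simp
      _ ≤ δ / w + δ / w := by gcongr
      _ = 2 * δ / w := by ring
  calc _ ≤ (|S' - S| + (√Qx' * √Qy' - √Qx * √Qy)) / (√Qx' * √Qy') :=
        abs_div_sub_div_le hSD hDD' (hw.trans_le hwD')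
    _ = |S' - S| / (√Qx' * √Qy') + (√Qx' * √Qy' - √Qx * √Qy) / (√Qx' * √Qy') :=
        add_div _ _ _
    _ ≤ δ / w + 2 * δ / w := by gcongr
    _ = 3 * δ / w := by ring

theorem pearson_bounded_effect_of_new_model :
    ∃ κ : ℝ, 0 < κ ∧
      ∀ (N : ℕ) (B v : ℝ) (x y : Fin (N + 1) → ℝ),
        0 < N → 0 < v →
        (∀ i, |x i| ≤ B) → (∀ i, |y i| ≤ B) →
        (N : ℝ) * v ≤ ∑ i, (center (fun j : Fin N => x j.castSucc) i) ^ 2 →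
        (N : ℝ) * v ≤ ∑ i, (center (fun j : Fin N => y j.castSucc) i) ^ 2 →
        ((N : ℝ) + 1) * v ≤ ∑ i, (center x i) ^ 2 →
        ((N : ℝ) + 1) * v ≤ ∑ i, (center y i) ^ 2 →
        |pcorr x y -
            pcorr (fun j : Fin N => x j.castSucc) (fun j : Fin N => y j.castSucc)| ≤
          κ * B ^ 2 / (N * v) := by
  refine ⟨12, by norm_num, fun N B v x y hN hv hx hy _ _ hQx hQy => ?_⟩
  rw [← comoment_self] at hQx hQy
  have hstep := abs_div_sqrt_mul_sqrt_sub_le (comoment_self_nonneg _) (comoment_self_nonneg _)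
    (comoment_sq_le (Fin.init x) (Fin.init y)) (by positivity) hQx hQy
    (comoment_init_self_le x) ((le_abs_self _).trans (abs_comoment_sub_comoment_init_le hN hx hx))
    (comoment_init_self_le y) ((le_abs_self _).trans (abs_comoment_sub_comoment_init_le hN hy hy))
    (abs_comoment_sub_comoment_init_le hN hx hy)
  rw [pcorr_eq, pcorr_eq]
  calc _ ≤ 3 * (4 * B ^ 2) / ((N + 1) * v) := hstep
    _ ≤ 12 * B ^ 2 / (N * v) := by
      rw [← mul_assoc]
      gcongr <;> linarith
end

section
/- The Jaccard distance d(A,B) = 1 − |A∩B|/|A∪B| satisfies the triangle inequality on finite sets: for finite sets A, B, C (with pairwise unions nonempty), d(A,C) ≤ d(A,B) + d(B,C). -/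
/-!
Write `d(A, B) = |A ∆ B| / |A ∪ B|` and let `U = A ∪ B ∪ C`. Adding the `k` points of `B` outside
`A ∪ C` to both numerator and denominator can only increase `|A ∆ C| / |A ∪ C|`, and turns the
denominator into `|U|`. Each point of `A ∆ C` lies in `A ∆ B` or in `B ∆ C`, while each of the `k`
extra points lies in both, so `|A ∆ C| + k ≤ |A ∆ B| + |B ∆ C|`. Finally, shrinking `U` back to
`A ∪ B` and `B ∪ C` only increases the two quotients.
-/

open Finset
open scoped symmDiff

theorem div_le_add_div_add {K : Type*} [Field K] [LinearOrder K] [IsStrictOrderedRing K]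
    {a b c : K} (hb : 0 < b) (hab : a ≤ b) (hc : 0 ≤ c) : a / b ≤ (a + c) / (b + c) := by
  rw [div_le_div_iff₀ hb (by positivity)]
  nlinarith

namespace Finset

variable {α : Type*} [DecidableEq α]

theorem one_sub_card_inter_div_card_union {s t : Finset α} (h : (s ∪ t).Nonempty) :
    1 - (#(s ∩ t) : ℝ) / #(s ∪ t) = #(s ∆ t) / #(s ∪ t) := by
  have hpos : (0 : ℝ) < #(s ∪ t) := by exact_mod_cast h.card_pos
  rw [symmDiff_eq_sup_sdiff_inf, sup_eq_union, inf_eq_inter,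
    cast_card_sdiff inter_subset_union]
  field_simp

theorem card_symmDiff_add_card_sdiff_union_le (s t u : Finset α) :
    #(s ∆ u) + #(t \ (s ∪ u)) ≤ #(s ∆ t) + #(t ∆ u) := by
  rw [← card_union_add_card_inter (s ∆ t)]
  gcongr
  · exact symmDiff_triangle s t u
  · intro x hx
    simp only [mem_sdiff, mem_union, not_or] at hx
    simp [mem_symmDiff, hx]

end Finset

theorem jaccard_distance_triangle {α : Type*} [DecidableEq α] (A B C : Finset α)
    (hAB : (A ∪ B).Nonempty) (hBC : (B ∪ C).Nonempty) (hAC : (A ∪ C).Nonempty) :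
    1 - ((A ∩ C).card : ℝ) / ((A ∪ C).card : ℝ) ≤
      (1 - ((A ∩ B).card : ℝ) / ((A ∪ B).card : ℝ)) +
        (1 - ((B ∩ C).card : ℝ) / ((B ∪ C).card : ℝ)) := by
  rw [one_sub_card_inter_div_card_union hAB, one_sub_card_inter_div_card_union hBC,
    one_sub_card_inter_div_card_union hAC]
  set U := B ∪ (A ∪ C)
  have hU : (#U : ℝ) = #(A ∪ C) + #(B \ (A ∪ C)) := by
    rw [← Nat.cast_add, add_comm, card_sdiff_add_card]
  have hAB_U : #(A ∪ B) ≤ #U := card_le_card (by grind)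
  have hBC_U : #(B ∪ C) ≤ #U := card_le_card (by grind)
  have hAB_pos : (0 : ℝ) < #(A ∪ B) := by exact_mod_cast hAB.card_pos
  have hBC_pos : (0 : ℝ) < #(B ∪ C) := by exact_mod_cast hBC.card_pos
  have hAC_pos : (0 : ℝ) < #(A ∪ C) := by exact_mod_cast hAC.card_pos
  calc (#(A ∆ C) : ℝ) / #(A ∪ C)
      ≤ (#(A ∆ C) + #(B \ (A ∪ C))) / #U := by
        rw [hU]
        exact div_le_add_div_add hAC_pos (by exact_mod_cast card_le_card symmDiff_subset_union)
          (Nat.cast_nonneg _)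
    _ ≤ (#(A ∆ B) + #(B ∆ C)) / #U := by
        gcongr ?_ / _
        exact_mod_cast card_symmDiff_add_card_sdiff_union_le A B C
    _ = #(A ∆ B) / #U + #(B ∆ C) / #U := add_div _ _ _
    _ ≤ #(A ∆ B) / #(A ∪ B) + #(B ∆ C) / #(B ∪ C) := by gcongr
end
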